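/- Suppose ℓ ≥ 2 and let Z = [A] be an asymmetric hard partition of m data points with ℓ clusters. Then √2 ≤ α_Z ≤ 2·√(⌈m/ℓ⌉), where ⌈x⌉ denotes the smallest integer greater than or equal to x. -/

import Mathlib

open scoped BigOperators
open MeasureTheory

noncomputable section

/-- Matrices as points of the Euclidean space `ℝ^{ℓ×m}` with the Frobenius norm. -/
abbrev Mat (l m : ℕ) := EuclideanSpace ℝ (Fin l × Fin m)

/-- `A` is a representation matrix: entries in `[0,1]` and each column sums to `1`. -/
def IsRep {l m : ℕ} (A : Mat l m) : Prop :=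
  (∀ p, 0 ≤ A p ∧ A p ≤ 1) ∧ ∀ j : Fin m, ∑ k : Fin l, A (k, j) = 1

/-- The representation space `𝒳`. -/
abbrev RepSpace (l m : ℕ) := {A : Mat l m // IsRep A}

/-- Action of a permutation on a matrix by permuting rows. -/
def permAct {l m : ℕ} (σ : Equiv.Perm (Fin l)) (A : Mat l m) : Mat l m :=
  WithLp.toLp 2 (fun p => A (σ⁻¹ p.1, p.2))

lemma isRep_permAct {l m : ℕ} (σ : Equiv.Perm (Fin l)) {A : Mat l m} (hA : IsRep A) :
    IsRep (permAct σ A) := by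
  refine ⟨fun p => hA.1 (σ⁻¹ p.1, p.2), fun j => ?_⟩
  have h := Equiv.sum_comp σ⁻¹ (fun k => A (k, j))
  simpa [permAct] using h.trans (hA.2 j)

instance {l m : ℕ} : SMul (Equiv.Perm (Fin l)) (RepSpace l m) :=
  ⟨fun σ A => ⟨permAct σ A.1, isRep_permAct σ A.2⟩⟩

lemma smul_rep_def {l m : ℕ} (σ : Equiv.Perm (Fin l)) (A : RepSpace l m) :
    (σ • A).1 = permAct σ A.1 := rfl

instance {l m : ℕ} : MulAction (Equiv.Perm (Fin l)) (RepSpace l m) where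
  one_smul A := Subtype.ext rfl
  mul_smul σ τ A := Subtype.ext rfl

/-- Two representation matrices are equivalent iff they lie in the same `Π`-orbit. -/
instance pSetoid (l m : ℕ) : Setoid (RepSpace l m) :=
  MulAction.orbitRel (Equiv.Perm (Fin l)) (RepSpace l m)

/-- The partition space `𝒫 = 𝒳/Π`. -/
abbrev PSpace (l m : ℕ) := Quotient (pSetoid l m)

/-- The intrinsic metric `δ` on `𝒫`: the minimal Euclidean distance between representatives. -/
def pdist {l m : ℕ} (X Y : PSpace l m) : ℝ :=
  sInf {d | ∃ A B : RepSpace l m, ⟦A⟧ = X ∧ ⟦B⟧ = Y ∧ d = dist A B}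

/-- The degree of asymmetry `α` of the partition represented by `A`:
`min {‖A - σ·A‖ : σ ≠ id}`. -/
def alpha {l m : ℕ} (A : RepSpace l m) : ℝ :=
  sInf {d | ∃ σ : Equiv.Perm (Fin l), σ ≠ 1 ∧ d = dist A (σ • A)}

/-- The closed ball in the partition space. -/
def pBall {l m : ℕ} (Z : PSpace l m) (r : ℝ) : Set (PSpace l m) :=
  {X | pdist X Z ≤ r}

/-- The metric topology on `𝒫` generated by the open balls of `δ`. -/
instance {l m : ℕ} : TopologicalSpace (PSpace l m) :=
  TopologicalSpace.generateFrom {s | ∃ (Z : PSpace l m) (r : ℝ), s = {X | pdist X Z < r}}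

instance {l m : ℕ} : MeasurableSpace (PSpace l m) := borel _

/-- `B(Z, r)` is a homogeneous ball: there is a bijective isometry onto the closed ball of
radius `r` in `𝒳` centered at a representative of `Z`. -/
def IsHomBall {l m : ℕ} (Z : PSpace l m) (r : ℝ) : Prop :=
  ∃ A : RepSpace l m, ⟦A⟧ = Z ∧
    ∃ φ : pBall Z r → {B : RepSpace l m | dist B A ≤ r},
      Function.Bijective φ ∧
        ∀ X Y : pBall Z r,
          dist (φ X : RepSpace l m) (φ Y : RepSpace l m) =
            pdist (X : PSpace l m) (Y : PSpace l m)

/-- The `k`-th row of a representation matrix, as a point of Euclidean space `ℝ^m`. -/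
def rowOf {l m : ℕ} (A : RepSpace l m) (k : Fin l) : EuclideanSpace ℝ (Fin m) :=
  WithLp.toLp 2 (fun j => A.1 (k, j))

/-- The support of a measure: the smallest closed set of full measure. -/
def msupport {l m : ℕ} (Q : Measure (PSpace l m)) : Set (PSpace l m) :=
  ⋂₀ {S | IsClosed S ∧ Q S = 1}

/-- The Dirichlet fundamental domain centered at `A`. -/
def DirDom {l m : ℕ} (A : RepSpace l m) : Set (RepSpace l m) :=
  {B | ∀ σ : Equiv.Perm (Fin l), dist B A ≤ dist B (σ • A)}

/-!
Every column of a hard partition is a standard basis vector, and `A`, `σ • A` have the same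
column sums, so where they differ in a column they differ in at least two entries, each by `1`:
hence `‖A - σ • A‖² ≥ 2` whenever `σ • A ≠ A`.
For the upper bound, swap the two rows of smallest sums `nₐ ≤ n_b`; this moves only the
`1`s of those rows, so `‖A - σ • A‖² = 2 (nₐ + n_b) ≤ 4 m / ℓ`.
-/

lemma two_mul_abs_le_sum_abs_of_sum_eq_zero {ι : Type*} [Fintype ι] [DecidableEq ι]
    {d : ι → ℝ} (hd : ∑ i, d i = 0) (i : ι) : 2 * |d i| ≤ ∑ j, |d j| := by
  have hi : d i = -∑ j ∈ Finset.univ.erase i, d j := by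
    rw [← Finset.add_sum_erase _ _ (Finset.mem_univ i)] at hd
    linarith
  have hrest : |d i| ≤ ∑ j ∈ Finset.univ.erase i, |d j| := by
    rw [hi, abs_neg]
    exact Finset.abs_sum_le_sum_abs _ _
  rw [← Finset.add_sum_erase _ _ (Finset.mem_univ i)]
  linarith

lemma exists_ne_add_le_two_mul_sum_div_card {ι : Type*} [Fintype ι] [Nontrivial ι]
    (n : ι → ℝ) : ∃ a b, a ≠ b ∧ n a + n b ≤ 2 * (∑ i, n i) / Fintype.card ι := by
  classical
  obtain ⟨a, ha⟩ := Finite.exists_min n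
  obtain ⟨c, hc⟩ := exists_ne a
  obtain ⟨b, hb, hbmin⟩ := (Finset.univ.erase a).exists_min_image n
    ⟨c, Finset.mem_erase.2 ⟨hc, Finset.mem_univ _⟩⟩
  refine ⟨a, b, (Finset.ne_of_mem_erase hb).symm, ?_⟩
  have hcard : (2 : ℝ) ≤ Fintype.card ι := by exact_mod_cast Fintype.one_lt_card
  have hrest : ((Fintype.card ι : ℝ) - 1) * n b ≤ ∑ i ∈ Finset.univ.erase a, n i := by
    have h := Finset.card_nsmul_le_sum _ n (n b) hbmin
    rwa [Finset.card_erase_of_mem (Finset.mem_univ a), Finset.card_univ, nsmul_eq_mul,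
      Nat.cast_pred Fintype.card_pos] at h
  rw [← Finset.add_sum_erase _ _ (Finset.mem_univ a), le_div_iff₀ (by linarith)]
  -- `2 (n a + (ℓ - 1) n b) - ℓ (n a + n b) = (ℓ - 2) (n b - n a) ≥ 0`
  nlinarith [mul_le_mul_of_nonneg_left (ha b) (by linarith : (0 : ℝ) ≤ Fintype.card ι - 2)]

lemma sq_sub_eq_abs_sub_of_zero_or_one {x y : ℝ} (hx : x = 0 ∨ x = 1) (hy : y = 0 ∨ y = 1) :
    (x - y) ^ 2 = |x - y| := by
  rcases hx with rfl | rfl <;> rcases hy with rfl | rfl <;> norm_num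

section RepSpace

variable {l m : ℕ}

lemma dist_smul_sq (A : RepSpace l m) (σ : Equiv.Perm (Fin l)) :
    dist A (σ • A) ^ 2 = ∑ k, ∑ j, (A.1 (k, j) - A.1 (σ⁻¹ k, j)) ^ 2 := by
  rw [Subtype.dist_eq, EuclideanSpace.dist_eq, Real.sq_sqrt (by positivity),
    Fintype.sum_prod_type]
  simp [Real.dist_eq, sq_abs, smul_rep_def, permAct]

lemma sum_sub_perm_column_eq_zero (A : RepSpace l m) (σ : Equiv.Perm (Fin l)) (j : Fin m) :
    ∑ k, (A.1 (k, j) - A.1 (σ⁻¹ k, j)) = 0 := by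
  rw [Finset.sum_sub_distrib, Equiv.sum_comp σ⁻¹ (fun k => A.1 (k, j)), sub_self]

lemma two_le_dist_smul_sq_of_hard (A : RepSpace l m) (hhard : ∀ p, A.1 p = 0 ∨ A.1 p = 1)
    (σ : Equiv.Perm (Fin l)) (hσ : σ • A ≠ A) : 2 ≤ dist A (σ • A) ^ 2 := by
  obtain ⟨k₀, j₀, hne⟩ : ∃ k j, A.1 (k, j) ≠ A.1 (σ⁻¹ k, j) := by
    by_contra! h
    exact hσ (Subtype.ext (by ext p; exact (h p.1 p.2).symm))
  have hsq : ∀ k j, (A.1 (k, j) - A.1 (σ⁻¹ k, j)) ^ 2 = |A.1 (k, j) - A.1 (σ⁻¹ k, j)| :=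
    fun k j => sq_sub_eq_abs_sub_of_zero_or_one (hhard _) (hhard _)
  have hone : |A.1 (k₀, j₀) - A.1 (σ⁻¹ k₀, j₀)| = 1 := by
    rcases hhard (k₀, j₀) with h | h <;> rcases hhard (σ⁻¹ k₀, j₀) with h' | h' <;>
      simp_all
  calc (2 : ℝ) = 2 * |A.1 (k₀, j₀) - A.1 (σ⁻¹ k₀, j₀)| := by rw [hone, mul_one]
    _ ≤ ∑ k, |A.1 (k, j₀) - A.1 (σ⁻¹ k, j₀)| :=
      two_mul_abs_le_sum_abs_of_sum_eq_zero (sum_sub_perm_column_eq_zero A σ j₀) k₀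
    _ = ∑ k, (A.1 (k, j₀) - A.1 (σ⁻¹ k, j₀)) ^ 2 := by simp only [hsq]
    _ ≤ ∑ k, ∑ j, (A.1 (k, j) - A.1 (σ⁻¹ k, j)) ^ 2 :=
      Finset.sum_le_sum fun k _ =>
        Finset.single_le_sum (f := fun j => (A.1 (k, j) - A.1 (σ⁻¹ k, j)) ^ 2)
          (fun j _ => sq_nonneg _) (Finset.mem_univ j₀)
    _ = dist A (σ • A) ^ 2 := (dist_smul_sq A σ).symm

lemma dist_swap_smul_sq_le_of_hard (A : RepSpace l m) (hhard : ∀ p, A.1 p = 0 ∨ A.1 p = 1)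
    {a b : Fin l} (hab : a ≠ b) :
    dist A (Equiv.swap a b • A) ^ 2 ≤ 2 * (∑ j, A.1 (a, j) + ∑ j, A.1 (b, j)) := by
  have hrows : ∀ x y,
      ∑ j, (A.1 (x, j) - A.1 (y, j)) ^ 2 ≤ ∑ j, A.1 (x, j) + ∑ j, A.1 (y, j) := by
    intro x y
    rw [← Finset.sum_add_distrib]
    gcongr with j
    calc (A.1 (x, j) - A.1 (y, j)) ^ 2 = |A.1 (x, j) - A.1 (y, j)| :=
          sq_sub_eq_abs_sub_of_zero_or_one (hhard _) (hhard _)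
      _ ≤ |A.1 (x, j)| + |A.1 (y, j)| := abs_sub _ _
      _ = A.1 (x, j) + A.1 (y, j) := by
          rw [abs_of_nonneg (A.2.1 _).1, abs_of_nonneg (A.2.1 _).1]
  rw [dist_smul_sq, Fintype.sum_eq_add a b hab fun k hk => by
    simp [Equiv.swap_apply_of_ne_of_ne hk.1 hk.2]]
  simp only [Equiv.swap_inv, Equiv.swap_apply_left, Equiv.swap_apply_right]
  linarith [hrows a b, hrows b a]

lemma sum_entries_eq (A : RepSpace l m) : ∑ k, ∑ j, A.1 (k, j) = m := by
  rw [Finset.sum_comm]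
  simp [A.2.2]

lemma alpha_le_dist_smul (A : RepSpace l m) {σ : Equiv.Perm (Fin l)} (hσ : σ ≠ 1) :
    alpha A ≤ dist A (σ • A) :=
  csInf_le ⟨0, by rintro _ ⟨τ, -, rfl⟩; exact dist_nonneg⟩ ⟨σ, hσ, rfl⟩

lemma le_alpha [Nontrivial (Fin l)] (A : RepSpace l m) {c : ℝ}
    (h : ∀ σ : Equiv.Perm (Fin l), σ ≠ 1 → c ≤ dist A (σ • A)) : c ≤ alpha A := by
  obtain ⟨σ, hσ⟩ := exists_ne (1 : Equiv.Perm (Fin l))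
  exact le_csInf ⟨_, σ, hσ, rfl⟩ (by rintro _ ⟨τ, hτ, rfl⟩; exact h τ hτ)

end RepSpace

theorem stmt11_general {l m : ℕ} (hl : 2 ≤ l) (A : RepSpace l m)
    (hhard : ∀ p, A.1 p = 0 ∨ A.1 p = 1) (hasym : 0 < alpha A) :
    Real.sqrt 2 ≤ alpha A ∧ alpha A ≤ 2 * Real.sqrt ((⌈(m : ℝ) / (l : ℝ)⌉ : ℤ) : ℝ) := by
  have : Nontrivial (Fin l) := Fin.nontrivial_iff_two_le.mpr hl
  constructor
  · refine le_alpha A fun σ hσ => ?_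
    have hmove : σ • A ≠ A := fun h =>
      (hasym.trans_le (alpha_le_dist_smul A hσ)).ne' (by rw [h, dist_self])
    exact (Real.sqrt_le_left dist_nonneg).2 (two_le_dist_smul_sq_of_hard A hhard σ hmove)
  · obtain ⟨a, b, hab, hsum⟩ :=
      exists_ne_add_le_two_mul_sum_div_card fun k => ∑ j, A.1 (k, j)
    rw [sum_entries_eq, Fintype.card_fin] at hsum
    set C : ℝ := ((⌈(m : ℝ) / (l : ℝ)⌉ : ℤ) : ℝ)
    have hC : (m : ℝ) / l ≤ C := Int.le_ceil _
    refine (alpha_le_dist_smul A (Equiv.swap_eq_one_iff.not.2 hab)).trans ?_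
    refine (pow_le_pow_iff_left₀ dist_nonneg (by positivity) two_ne_zero).1 ?_
    calc dist A (Equiv.swap a b • A) ^ 2 ≤ 2 * (2 * (m : ℝ) / l) := by
          linarith [dist_swap_smul_sq_le_of_hard A hhard hab]
      _ ≤ 4 * C := by rw [mul_div_assoc]; linarith
      _ = (2 * Real.sqrt C) ^ 2 := by
          rw [mul_pow, Real.sq_sqrt ((div_nonneg m.cast_nonneg l.cast_nonneg).trans hC)]; norm_num

theorem stmt11 {l m : ℕ} (hl : 2 ≤ l) (hm : 1 ≤ m) (A : RepSpace l m)
    (hhard : ∀ p, A.1 p = 0 ∨ A.1 p = 1) (hasym : 0 < alpha A) :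
    Real.sqrt 2 ≤ alpha A ∧ alpha A ≤ 2 * Real.sqrt ((⌈(m : ℝ) / (l : ℝ)⌉ : ℤ) : ℝ) :=
  stmt11_general hl A hhard hasym

end
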